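/- arXiv:2101.08610 — 4 statements merged into one kernel-verified Lean document; each statement's English description precedes it below -/
import Mathlib

section
/- Let k ≥ 2 be an integer, and suppose that for all real y with 1 < y ≤ 2k one has P(2k, y) ≤ 2y/log y, where P(x,y) = π(x) - π(x-y) counts primes in (x-y, x]. Then the sum over primes p with k ≤ p ≤ 2k-1 of 1/(2k - p) is at most 2/(3 log 2) + 2 log log k + 2 + 2/log k. -/
open Real Finset

/-- `P x y = π(x) - π(x - y)` counts primes in `(x - y, x]`, with `π` evaluated at
natural floors. -/
noncomputable def primesInShortInterval (x y : ℝ) : ℝ :=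
  (Nat.primeCounting ⌊x⌋₊ : ℝ) - (Nat.primeCounting ⌊x - y⌋₊ : ℝ)

/-!
Substitute `n = 2k - p`: the sum becomes `∑_{n ≤ k} c n / n`, where `c n` indicates that `2k - n`
is prime. The partial sums `C m = ∑_{n ≤ m} c n` count the primes in `[2k - m, 2k)`, so the
hypothesis gives `C m ≤ 2(m+1)/log(m+1)`. Abel summation writes the sum as
`C k / (k+1) + ∑_{m ≤ k} C m / (m(m+1))`. The boundary term is at most `2 / log k`; the terms
`m = 1, 2` are at most `1/2 + 1/3` by `C m ≤ m`; for `m ≥ 3` the term is at most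
`2 / (m log m) ≤ 2 (log log m - log log (m-1))` (apply `log t ≥ 1 - 1/t` twice), which
telescopes to `2 log log k - 2 log log 2`. Finally `5/6 - 2 log log 2 ≤ 2/(3 log 2) + 2`.
-/

lemma Nat.primeCounting_eq_add_card_filter_Ioc {a n : ℕ} (h : a ≤ n) :
    Nat.primeCounting n = Nat.primeCounting a + #{p ∈ Ioc a n | p.Prime} := by
  rw [← primesLE_card_eq_primeCounting, ← primesLE_card_eq_primeCounting,
    ← card_union_of_disjoint]
  · congr 1
    ext p
    simp only [mem_primesLE, mem_union, mem_filter, mem_Ioc]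
    grind
  · rw [disjoint_left]
    simp only [mem_primesLE, mem_filter, mem_Ioc]
    omega

lemma primesInShortInterval_natCast {n m : ℕ} (h : m ≤ n) :
    primesInShortInterval n m = #{p ∈ Ioc (n - m) n | p.Prime} := by
  rw [primesInShortInterval, ← Nat.cast_sub h, Nat.floor_natCast, Nat.floor_natCast,
    Nat.primeCounting_eq_add_card_filter_Ioc (Nat.sub_le n m)]
  push_cast
  ring

lemma sum_range_ite_prime_sub_le_primesInShortInterval {n m : ℕ} (h : m < n) :
    ∑ i ∈ range m, (if (n - 1 - i).Prime then (1 : ℝ) else 0) ≤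
      primesInShortInterval n (m + 1) := by
  have hreflect : ∑ i ∈ range m, (if (n - 1 - i).Prime then (1 : ℝ) else 0) =
      #{p ∈ Ico (n - m) n | p.Prime} := by
    rw [← sum_boole, sum_Ico_eq_sum_range, ← sum_range_reflect, Nat.sub_sub_self h.le]
    refine sum_congr rfl fun i hi => ?_
    rw [show n - 1 - (m - 1 - i) = n - m + i by grind]
  rw [hreflect, ← Nat.cast_add_one, primesInShortInterval_natCast h]
  exact_mod_cast card_le_card (filter_subset_filter _ fun p => by grind)

lemma sum_filter_prime_Icc_one_div_two_mul_sub {k : ℕ} (hk : 0 < k) :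
    ∑ p ∈ (Icc k (2 * k - 1)).filter Nat.Prime, (1 : ℝ) / (2 * k - p) =
      ∑ i ∈ range k, (if (2 * k - 1 - i).Prime then (1 : ℝ) else 0) / (i + 1) := by
  rw [sum_filter, ← Ico_add_one_right_eq_Icc, sum_Ico_eq_sum_range,
    show 2 * k - 1 + 1 - k = k by omega, ← sum_range_reflect]
  refine sum_congr rfl fun i hi => ?_
  have hi := mem_range.mp hi
  rw [show k + (k - 1 - i) = 2 * k - 1 - i by omega]
  split_ifs
  · push_cast [Nat.cast_sub (show i ≤ 2 * k - 1 by omega), Nat.cast_sub (show 1 ≤ 2 * k by omega)]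
    ring
  · simp

lemma sum_range_mul_by_parts {R : Type*} [CommRing R] (f g : ℕ → R) (n : ℕ) :
    ∑ i ∈ range n, f i * g i =
      f n * ∑ i ∈ range n, g i + ∑ i ∈ range n, (f i - f (i + 1)) * ∑ j ∈ range (i + 1), g j := by
  induction n with
  | zero => simp
  | succ n ih =>
    rw [sum_range_succ, ih, sum_range_succ _ n, sum_range_succ _ n, sum_range_succ g n]
    ring

lemma sub_div_le_log_sub_log {x y : ℝ} (hx : 0 < x) (hy : 0 < y) :
    (y - x) / y ≤ log y - log x := by
  have := one_sub_inv_le_log_of_pos (div_pos hy hx)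
  rw [log_div hy.ne' hx.ne', inv_div] at this
  rwa [sub_div, div_self hy.ne']

lemma sub_div_mul_log_le_log_log_sub {x y : ℝ} (hx : 1 < x) (hxy : x ≤ y) :
    (y - x) / (y * log y) ≤ log (log y) - log (log x) := by
  have hlx : 0 < log x := log_pos hx
  have hly : 0 < log y := log_pos (hx.trans_le hxy)
  calc (y - x) / (y * log y) = (y - x) / y / log y := by rw [div_div]
    _ ≤ (log y - log x) / log y := by
        gcongr
        exact sub_div_le_log_sub_log (by linarith) (by linarith)
    _ ≤ log (log y) - log (log x) := sub_div_le_log_sub_log hlx hly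

lemma sub_inv_mul_le_two_mul_log_log_sub {x C : ℝ} (hx : 1 < x)
    (hC : C ≤ 2 * (x + 2) / log (x + 2)) :
    ((x + 1)⁻¹ - (x + 2)⁻¹) * C ≤ 2 * (log (log (x + 1)) - log (log x)) := by
  have hlog : 0 < log (x + 1) := log_pos (by linarith)
  calc ((x + 1)⁻¹ - (x + 2)⁻¹) * C ≤ ((x + 1)⁻¹ - (x + 2)⁻¹) * (2 * (x + 2) / log (x + 2)) := by
        gcongr
        exact sub_nonneg.2 (inv_anti₀ (by linarith) (by linarith))
    _ = 2 * (1 / ((x + 1) * log (x + 2))) := by field_simp; ring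
    _ ≤ 2 * ((x + 1 - x) / ((x + 1) * log (x + 1))) := by
        rw [add_sub_cancel_left]
        gcongr
        linarith
    _ ≤ 2 * (log (log (x + 1)) - log (log x)) := by
        gcongr
        exact sub_div_mul_log_le_log_log_sub hx (by linarith)

lemma sum_range_div_succ_le_of_sum_range_le (c : ℕ → ℝ) {K : ℕ} (hK : 2 ≤ K) (hc : ∀ i, c i ≤ 1)
    (hC : ∀ m : ℕ, 1 ≤ m → m ≤ K → ∑ i ∈ range m, c i ≤ 2 * (m + 1) / log (m + 1)) :
    ∑ i ∈ range K, c i / (i + 1) ≤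
      2 / log K + 5 / 6 + 2 * log (log K) - 2 * log (log 2) := by
  have hboundary : ((K : ℝ) + 1)⁻¹ * ∑ i ∈ range K, c i ≤ 2 / log K := by
    have hK' : (2 : ℝ) ≤ K := by exact_mod_cast hK
    calc _ ≤ ((K : ℝ) + 1)⁻¹ * (2 * (K + 1) / log (K + 1)) := by
          gcongr
          exact hC K (by omega) le_rfl
      _ = 2 / log (K + 1) := by field_simp
      _ ≤ 2 / log K := by
          gcongr
          · exact log_pos (by linarith)
          · linarith
  have hhead : ∑ i ∈ range 2, (((i : ℝ) + 1)⁻¹ - (((i + 1 : ℕ) : ℝ) + 1)⁻¹) *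
      ∑ j ∈ range (i + 1), c j ≤ 5 / 6 := by
    simp only [sum_range_succ, sum_range_zero]
    norm_num
    linarith [hc 0, hc 1]
  have htail : ∑ i ∈ Ico 2 K, (((i : ℝ) + 1)⁻¹ - (((i + 1 : ℕ) : ℝ) + 1)⁻¹) *
      ∑ j ∈ range (i + 1), c j ≤ 2 * log (log K) - 2 * log (log 2) := by
    calc _ ≤ ∑ i ∈ Ico 2 K, 2 * (log (log ((i + 1 : ℕ) : ℝ)) - log (log (i : ℝ))) := by
          refine sum_le_sum fun i hi => ?_
          have hi := mem_Ico.mp hi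
          have hCi := hC (i + 1) (by omega) (by omega)
          push_cast at hCi ⊢
          rw [show (i : ℝ) + 1 + 1 = i + 2 by ring] at hCi ⊢
          exact sub_inv_mul_le_two_mul_log_log_sub (by exact_mod_cast hi.1) hCi
      _ = 2 * log (log K) - 2 * log (log 2) := by
          rw [← mul_sum, sum_Ico_sub (fun n : ℕ => log (log (n : ℝ))) hK]
          push_cast
          ring
  have hsum : ∑ i ∈ range K, (((i : ℝ) + 1)⁻¹ - (((i + 1 : ℕ) : ℝ) + 1)⁻¹) *
      ∑ j ∈ range (i + 1), c j ≤ 5 / 6 + (2 * log (log K) - 2 * log (log 2)) := by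
    rw [← sum_range_add_sum_Ico _ hK]
    exact add_le_add hhead htail
  simp_rw [div_eq_inv_mul (c _)]
  rw [sum_range_mul_by_parts (fun i : ℕ => ((i : ℝ) + 1)⁻¹) c K]
  linarith

lemma two_mul_log_log_two_ge : 5 / 6 - 2 / (3 * log 2) - 2 ≤ 2 * log (log 2) := by
  have hlog2 : 1 / 2 < log 2 := by linarith [log_two_gt_d9]
  have hloglog2 := one_sub_inv_le_log_of_pos (log_pos one_lt_two)
  have : 4 / (3 * log 2) ≤ 19 / 6 := by
    rw [div_le_iff₀ (by positivity)]
    linarith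
  rw [inv_eq_one_div] at hloglog2
  linarith [show 2 / (3 * log 2) = 2 * (1 / log 2) - 4 / (3 * log 2) by field_simp; ring]

theorem sum_inv_two_k_sub_p_le (k : ℕ) (hk : 2 ≤ k)
    (hMont : ∀ y : ℝ, 1 < y → y ≤ 2 * k →
      primesInShortInterval (2 * k) y ≤ 2 * y / Real.log y) :
    ∑ p ∈ (Finset.Icc k (2 * k - 1)).filter Nat.Prime, (1 : ℝ) / (2 * k - p) ≤
      2 / (3 * Real.log 2) + 2 * Real.log (Real.log k) + 2 + 2 / Real.log k := by
  rw [sum_filter_prime_Icc_one_div_two_mul_sub (by omega)]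
  have hcount (m : ℕ) (hm : 1 ≤ m) (hmk : m ≤ k) :
      ∑ i ∈ range m, (if (2 * k - 1 - i).Prime then (1 : ℝ) else 0) ≤
        2 * (m + 1) / log (m + 1) := by
    have hP := sum_range_ite_prime_sub_le_primesInShortInterval (n := 2 * k) (m := m) (by omega)
    push_cast at hP
    exact hP.trans (hMont _ (by norm_cast; omega) (by norm_cast; omega))
  have hsum := sum_range_div_succ_le_of_sum_range_le _ hk (fun i => by split <;> norm_num) hcount
  linarith [two_mul_log_log_two_ge]
end

section
/- For every integer l ≥ 2 and real x ≥ 3, the sum over primes p with x/2 < p^l ≤ x - 1.5 of 1/(x - p^l) is at most (2/l)·∫ from √(x/2) to √(x-1.5)-1 of dy/(x - y²) + 16/15. -/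
open Real Finset

/-!
Write `g n = √(n ^ l)`. For every prime `p` in the range except the largest one `m`, the interval
`[g p, g (p + 1)]` has length at least `l / 2` (Bernoulli's inequality) and on it
`1 / (x - y ^ 2) ≥ 1 / (x - p ^ l)`, so the term of `p` is at most `2 / l` times the integral over
that interval. Apart from the pair `(2, 3)`, which `2 ^ l > x / 2` and `3 ^ l < x` rule out,
consecutive primes differ by at least `2`, hence `g (p + 1) + 1 ≤ g m ≤ √(x - 1.5)`: these disjoint
intervals all lie in `[√(x / 2), √(x - 1.5) - 1]`. The largest prime contributes at most `2 / 3`,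
and the integral is at least `-2 / x`, which covers the cases where the range of integration is
reversed.
-/

theorem Nat.Prime.add_two_le_or_eq_two_and_eq_three {p q : ℕ} (hp : p.Prime) (hq : q.Prime)
    (hpq : p < q) : p + 2 ≤ q ∨ (p = 2 ∧ q = 3) := by
  by_contra! h
  obtain rfl : q = p + 1 := by omega
  rcases Nat.even_or_odd p with hev | hodd
  · have := hp.even_iff.1 hev
    omega
  · have := hq.even_iff.1 hodd.add_one
    have := hp.two_le
    omega

theorem two_mul_two_pow_le_three_pow {l : ℕ} (hl : 2 ≤ l) : 2 * 2 ^ l ≤ 3 ^ l := by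
  induction l, hl using Nat.le_induction with
  | base => norm_num
  | succ l _ ih => rw [pow_succ, pow_succ]; omega

theorem Nat.Prime.add_two_le_of_pow_lt_two_mul_pow {p q l : ℕ} (hl : 2 ≤ l) (hp : p.Prime)
    (hq : q.Prime) (hpq : p < q) (h : q ^ l < 2 * p ^ l) : p + 2 ≤ q := by
  rcases hp.add_two_le_or_eq_two_and_eq_three hq hpq with hgap | ⟨rfl, rfl⟩
  · exact hgap
  · exact absurd h (two_mul_two_pow_le_three_pow hl).not_gt

theorem rpow_add_le_add_one_rpow {t r : ℝ} (ht : 1 ≤ t) (hr : 1 ≤ r) :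
    t ^ r + r ≤ (t + 1) ^ r := by
  have ht0 : 0 < t := by linarith
  have hbern : 1 + r * t⁻¹ ≤ (1 + t⁻¹) ^ r :=
    one_add_mul_self_le_rpow_one_add (by linarith [inv_pos.2 ht0]) hr
  have hpow : 1 ≤ t ^ (r - 1) := one_le_rpow ht (by linarith)
  calc t ^ r + r ≤ t ^ r + r * t ^ (r - 1) := by nlinarith
    _ = t ^ r * (1 + r * t⁻¹) := by rw [rpow_sub_one ht0.ne']; ring
    _ ≤ t ^ r * (1 + t⁻¹) ^ r := by gcongr
    _ = (t + 1) ^ r := by rw [← mul_rpow ht0.le (by positivity)]; congr 1; field_simp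

theorem sqrt_pow_add_half_le {t : ℝ} {l : ℕ} (ht : 1 ≤ t) (hl : 2 ≤ l) :
    √(t ^ l) + l / 2 ≤ √((t + 1) ^ l) := by
  have hsqrt : ∀ s : ℝ, 0 ≤ s → √(s ^ l) = s ^ ((l : ℝ) / 2) := fun s hs => by
    rw [sqrt_eq_rpow, ← rpow_natCast, ← rpow_mul hs]
    ring_nf
  rw [hsqrt t (by linarith), hsqrt (t + 1) (by linarith)]
  have : (2 : ℝ) ≤ l := by exact_mod_cast hl
  exact rpow_add_le_add_one_rpow ht (by linarith)

theorem sum_integral_le_integral_of_monotone {f : ℝ → ℝ} {g : ℕ → ℝ} (hg : Monotone g)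
    {T : Finset ℕ} {a b : ℝ} (hT : ∀ n ∈ T, a ≤ g n ∧ g (n + 1) ≤ b) (hab : a ≤ b)
    (hfi : IntervalIntegrable f MeasureTheory.volume a b) (hf0 : ∀ y ∈ Set.Icc a b, 0 ≤ f y) :
    ∑ n ∈ T, ∫ y in g n..g (n + 1), f y ≤ ∫ y in a..b, f y := by
  rcases T.eq_empty_or_nonempty with rfl | hne
  · simpa using intervalIntegral.integral_nonneg hab hf0
  set N := T.min' hne
  set M := T.max' hne + 1
  have hN := (hT N (T.min'_mem hne)).1
  have hM := (hT _ (T.max'_mem hne)).2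
  have hNM : N ≤ M := Nat.le_succ_of_le (T.min'_le_max' hne)
  have hsub : ∀ k ∈ Set.Ico N M, a ≤ g k ∧ g (k + 1) ≤ b := fun k hk =>
    ⟨hN.trans (hg hk.1), (hg hk.2).trans hM⟩
  calc ∑ n ∈ T, ∫ y in g n..g (n + 1), f y
      ≤ ∑ k ∈ Ico N M, ∫ y in g k..g (k + 1), f y := by
        refine sum_le_sum_of_subset_of_nonneg (fun n hn => ?_) fun k hk _ => ?_
        · exact mem_Ico.2 ⟨T.min'_le n hn, Nat.lt_succ_of_le (T.le_max' n hn)⟩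
        · have hk := hsub k (mem_Ico.1 hk)
          exact intervalIntegral.integral_nonneg (hg k.le_succ) fun y hy =>
            hf0 y ⟨hk.1.trans hy.1, hy.2.trans hk.2⟩
    _ = ∫ y in g N..g M, f y := by
        refine intervalIntegral.sum_integral_adjacent_intervals_Ico hNM fun k hk => ?_
        have hk := hsub k hk
        refine hfi.mono_set (Set.uIcc_subset_uIcc ?_ ?_) <;> rw [Set.uIcc_of_le hab]
        exacts [⟨hk.1, (hg k.le_succ).trans hk.2⟩, ⟨hk.1.trans (hg k.le_succ), hk.2⟩]
    _ ≤ ∫ y in a..b, f y := intervalIntegral.integral_mono_interval hN (hg hNM) hM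
        (MeasureTheory.ae_restrict_of_forall_mem measurableSet_Ioc fun y hy =>
          hf0 y (Set.Ioc_subset_Icc_self hy)) hfi

section OneDivSubSq

variable {x a b : ℝ}

theorem one_div_sub_sq_pos {y : ℝ} (hy : y ∈ Set.Ico 0 √x) : 0 < 1 / (x - y ^ 2) :=
  one_div_pos.2 (sub_pos.2 ((lt_sqrt hy.1).1 hy.2))

theorem intervalIntegrable_one_div_sub_sq (ha : a ∈ Set.Ico 0 √x) (hb : b ∈ Set.Ico 0 √x) :
    IntervalIntegrable (fun y => 1 / (x - y ^ 2)) MeasureTheory.volume a b := by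
  refine ContinuousOn.intervalIntegrable (continuousOn_const.div (by fun_prop) fun y hy => ?_)
  exact (one_div_pos.1 (one_div_sub_sq_pos (Set.ordConnected_Ico.uIcc_subset ha hb hy))).ne'

theorem sub_div_le_integral_one_div_sub_sq (ha : 0 ≤ a) (hab : a ≤ b) (hb : b < √x) :
    (b - a) / (x - a ^ 2) ≤ ∫ y in a..b, 1 / (x - y ^ 2) := by
  calc (b - a) / (x - a ^ 2) = ∫ _ in a..b, 1 / (x - a ^ 2) := by
        rw [intervalIntegral.integral_const, smul_eq_mul, mul_one_div]
    _ ≤ ∫ y in a..b, 1 / (x - y ^ 2) := by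
      refine intervalIntegral.integral_mono_on hab intervalIntegrable_const
        (intervalIntegrable_one_div_sub_sq ⟨ha, hab.trans_lt hb⟩ ⟨ha.trans hab, hb⟩)
        fun y hy => ?_
      have hy0 : 0 ≤ y := ha.trans hy.1
      have hyx := (lt_sqrt hy0).1 (hy.2.trans_lt hb)
      gcongr
      exact hy.1

end OneDivSubSq

theorem neg_two_div_le_mul_integral_one_div_sub_sq {l : ℕ} {x : ℝ} (hl : 2 ≤ l) (hx : 3 ≤ x) :
    -(2 / x) ≤ 2 / l * ∫ y in √(x / 2)..(√(x - 1.5) - 1), 1 / (x - y ^ 2) := by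
  set c := √(x / 2)
  set d := √(x - 1.5) - 1 with hd_def
  have hl2 : 2 / (l : ℝ) ≤ 1 := by
    rw [div_le_one (by positivity)]
    exact_mod_cast hl
  have hx0 : 0 < 2 / x := by positivity
  have hd0 : 0 ≤ d := by
    have : 1 ≤ √(x - 1.5) := one_le_sqrt.2 (by linarith)
    linarith [hd_def]
  rcases le_or_gt c d with hcd | hdc
  · have hdx : d < √x := by
      have := sqrt_le_sqrt (show x - 1.5 ≤ x by linarith)
      linarith [hd_def]
    have : 0 ≤ ∫ y in c..d, 1 / (x - y ^ 2) := intervalIntegral.integral_nonneg hcd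
      fun y hy => (one_div_sub_sq_pos ⟨(sqrt_nonneg _).trans hy.1, hy.2.trans_lt hdx⟩).le
    have : 0 ≤ 2 / (l : ℝ) := by positivity
    nlinarith
  · -- on `[d, c]` we have `y ^ 2 ≤ x / 2`, and `c - d ≤ 1` because `x / 2 ≤ x - 1.5`
    have hbound := intervalIntegral.norm_integral_le_of_norm_le_const (C := 2 / x)
      (f := fun y => 1 / (x - y ^ 2)) (a := c) (b := d) fun y hy => by
        rw [Set.uIoc_of_ge hdc.le] at hy
        have hy2 : y ^ 2 ≤ x / 2 := (le_sqrt (by linarith [hy.1]) (by positivity)).1 hy.2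
        rw [norm_of_nonneg (one_div_nonneg.2 (by linarith)),
          div_le_div_iff₀ (by linarith) (by linarith)]
        linarith
    have hcd : |d - c| ≤ 1 := by
      rw [abs_of_neg (by linarith)]
      linarith [sqrt_le_sqrt (show x / 2 ≤ x - 1.5 by linarith)]
    have := neg_le_of_abs_le ((norm_eq_abs _).symm.trans_le hbound)
    have : 0 ≤ 2 / (l : ℝ) := by positivity
    nlinarith [mul_le_mul_of_nonneg_left hcd hx0.le]

theorem sqrt_succ_pow_le_sqrt_sub_one {l p m : ℕ} {x : ℝ} (hl : 2 ≤ l) (hp : p.Prime)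
    (hm : m.Prime) (hpm : p < m) (hpx : x / 2 < (p : ℝ) ^ l) (hmx : (m : ℝ) ^ l ≤ x - 1.5) :
    √(((p : ℝ) + 1) ^ l) ≤ √(x - 1.5) - 1 := by
  have hgap : p + 2 ≤ m := hp.add_two_le_of_pow_lt_two_mul_pow hl hm hpm
    (by exact_mod_cast (show (m : ℝ) ^ l < 2 * (p : ℝ) ^ l by linarith))
  have hnext : √(((p : ℝ) + 1) ^ l) + l / 2 ≤ √(((p : ℝ) + 2) ^ l) := by
    simpa [add_assoc, one_add_one_eq_two] using
      sqrt_pow_add_half_le (t := p + 1) (by linarith [(Nat.cast_nonneg p : (0 : ℝ) ≤ p)]) hl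
  have hmono : √(((p : ℝ) + 2) ^ l) ≤ √((m : ℝ) ^ l) :=
    sqrt_le_sqrt (pow_le_pow_left₀ (by positivity) (by exact_mod_cast hgap) l)
  have hl2 : (2 : ℝ) ≤ l := by exact_mod_cast hl
  linarith [sqrt_le_sqrt hmx]

theorem sum_one_div_sub_pow_le_integral {l m : ℕ} {x : ℝ} (hl : 2 ≤ l) {T : Finset ℕ}
    (hT : ∀ p ∈ T, p.Prime ∧ x / 2 < (p : ℝ) ^ l ∧ p < m) (hm : m.Prime)
    (hmx : (m : ℝ) ^ l ≤ x - 1.5) (hne : T.Nonempty) :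
    ∑ p ∈ T, 1 / (x - (p : ℝ) ^ l) ≤
      2 / l * ∫ y in √(x / 2)..(√(x - 1.5) - 1), 1 / (x - y ^ 2) := by
  set g : ℕ → ℝ := fun n => √((n : ℝ) ^ l)
  have hg : Monotone g := fun a b hab =>
    sqrt_le_sqrt (pow_le_pow_left₀ (Nat.cast_nonneg a) (Nat.cast_le.2 hab) l)
  have hdx : √(x - 1.5) - 1 < √x := by
    have := sqrt_le_sqrt (show x - 1.5 ≤ x by linarith)
    linarith
  have hbounds : ∀ p ∈ T, √(x / 2) ≤ g p ∧ g (p + 1) ≤ √(x - 1.5) - 1 := fun p hp => by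
    obtain ⟨hpp, hpx, hpm⟩ := hT p hp
    exact ⟨sqrt_le_sqrt hpx.le, by
      simpa [g] using sqrt_succ_pow_le_sqrt_sub_one hl hpp hm hpm hpx hmx⟩
  have hterm : ∀ p ∈ T, 1 / (x - (p : ℝ) ^ l) ≤ 2 / l * ∫ y in g p..g (p + 1), 1 / (x - y ^ 2) :=
    fun p hp => by
      have hlen : g p + l / 2 ≤ g (p + 1) := by
        simpa [g] using sqrt_pow_add_half_le (t := p) (by exact_mod_cast (hT p hp).1.one_lt.le) hl
      have hint := sub_div_le_integral_one_div_sub_sq (a := g p) (b := g (p + 1))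
        (sqrt_nonneg _) (hg p.le_succ) ((hbounds p hp).2.trans_lt hdx)
      rw [sq_sqrt (by positivity)] at hint
      have hpx : 0 < x - (p : ℝ) ^ l := by
        have := pow_lt_pow_left₀ (Nat.cast_lt (α := ℝ).2 (hT p hp).2.2) (Nat.cast_nonneg p)
          (by omega : l ≠ 0)
        linarith
      calc 1 / (x - (p : ℝ) ^ l) = 2 / l * ((l / 2) / (x - (p : ℝ) ^ l)) := by
            field_simp
        _ ≤ 2 / l * ((g (p + 1) - g p) / (x - (p : ℝ) ^ l)) := by gcongr; linarith
        _ ≤ _ := by gcongr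
  obtain ⟨p, hp⟩ := hne
  have hcd : √(x / 2) ≤ √(x - 1.5) - 1 :=
    (hbounds p hp).1.trans ((hg p.le_succ).trans (hbounds p hp).2)
  have hc : √(x / 2) ∈ Set.Ico 0 √x := ⟨sqrt_nonneg _, hcd.trans_lt hdx⟩
  calc ∑ p ∈ T, 1 / (x - (p : ℝ) ^ l)
      ≤ ∑ p ∈ T, (2 / l : ℝ) * ∫ y in g p..g (p + 1), 1 / (x - y ^ 2) := sum_le_sum hterm
    _ = (2 / l : ℝ) * ∑ p ∈ T, ∫ y in g p..g (p + 1), 1 / (x - y ^ 2) := (mul_sum _ _ _).symm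
    _ ≤ _ := by
      gcongr
      exact sum_integral_le_integral_of_monotone hg hbounds hcd
        (intervalIntegrable_one_div_sub_sq hc ⟨hc.1.trans hcd, hdx⟩)
        fun y hy => (one_div_sub_sq_pos ⟨hc.1.trans hy.1, hy.2.trans_lt hdx⟩).le

theorem sum_primePowers_le_integral (l : ℕ) (hl : 2 ≤ l) (x : ℝ) (hx : 3 ≤ x) :
    ∑ p ∈ (Finset.Icc 1 ⌊x⌋₊).filter
        (fun p => Nat.Prime p ∧ x / 2 < (p : ℝ) ^ l ∧ (p : ℝ) ^ l ≤ x - 1.5),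
      (1 : ℝ) / (x - (p : ℝ) ^ l) ≤
    (2 / l) * (∫ y in Real.sqrt (x / 2)..(Real.sqrt (x - 1.5) - 1), 1 / (x - y ^ 2))
      + 16 / 15 := by
  set S := (Finset.Icc 1 ⌊x⌋₊).filter
    (fun p => Nat.Prime p ∧ x / 2 < (p : ℝ) ^ l ∧ (p : ℝ) ^ l ≤ x - 1.5)
  set I := ∫ y in √(x / 2)..(√(x - 1.5) - 1), 1 / (x - y ^ 2)
  have hS : ∀ p ∈ S, p.Prime ∧ x / 2 < (p : ℝ) ^ l ∧ (p : ℝ) ^ l ≤ x - 1.5 :=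
    fun p hp => (mem_filter.1 hp).2
  have hI : -(2 / x) ≤ 2 / l * I := neg_two_div_le_mul_integral_one_div_sub_sq hl hx
  rcases S.eq_empty_or_nonempty with hSe | hne
  · rw [hSe, sum_empty]
    linarith [(div_le_div_iff_of_pos_left two_pos (by linarith) three_pos).2 hx]
  set m := S.max' hne
  obtain ⟨hmp, -, hmx⟩ := hS m (S.max'_mem hne)
  have hx5 : 5.5 ≤ x := by
    have : (2 : ℝ) ^ 2 ≤ (m : ℝ) ^ l := calc
      (2 : ℝ) ^ 2 ≤ (m : ℝ) ^ 2 := pow_le_pow_left₀ two_pos.le (by exact_mod_cast hmp.two_le) 2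
      _ ≤ (m : ℝ) ^ l := pow_le_pow_right₀ (by exact_mod_cast hmp.one_lt.le) hl
    linarith
  have hmterm : 1 / (x - (m : ℝ) ^ l) ≤ 2 / 3 := by
    rw [div_le_div_iff₀ (by linarith) three_pos]
    linarith
  have hrest : ∑ p ∈ S.erase m, 1 / (x - (p : ℝ) ^ l) ≤ 2 / l * I + 2 / x := by
    rcases (S.erase m).eq_empty_or_nonempty with he | he
    · rw [he, sum_empty]
      linarith
    · refine (sum_one_div_sub_pow_le_integral hl (fun p hp => ?_) hmp hmx he).trans
        (le_add_of_nonneg_right (by positivity))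
      obtain ⟨hpm, hpS⟩ := mem_erase.1 hp
      exact ⟨(hS p hpS).1, (hS p hpS).2.1, lt_of_le_of_ne (S.le_max' p hpS) hpm⟩
  rw [← add_sum_erase S _ (S.max'_mem hne)]
  linarith [(div_le_div_iff_of_pos_left two_pos (by linarith) (by norm_num : (0 : ℝ) < 5.5)).2 hx5]
end

section
/- Let x > 1, q ≥ 2, T ≥ 2, R₀ > 0, λ > 0. Suppose ρ = β + iγ with β = 1 - λ/log(qT), β < 1 - 1/(R₀ log(q|γ|)), and 1 ≤ |γ| ≤ T. If exp(√(log x / R₀)) ≥ (qT)^{1/(R₀ λ)}, then x^{β-1}/|γ| ≤ q · x^{-λ/log(qT)} / (qT)^{1/(R₀λ)}. -/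
open Real

theorem rpow_div_abs_im_le (x q T R₀ lam : ℝ) (ρ : ℂ)
    (hx : 1 < x) (hq : 2 ≤ q) (hT : 2 ≤ T) (hR₀ : 0 < R₀) (hlam : 0 < lam)
    (hβ : ρ.re = 1 - lam / Real.log (q * T))
    (hβzf : ρ.re < 1 - 1 / (R₀ * Real.log (q * |ρ.im|)))
    (hγ : 1 ≤ |ρ.im|) (hγT : |ρ.im| ≤ T)
    (hcase : Real.exp (Real.sqrt (Real.log x / R₀)) ≥ (q * T) ^ (1 / (R₀ * lam))) :
    x ^ (ρ.re - 1) / |ρ.im| ≤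
      q * x ^ (-(lam / Real.log (q * T))) / (q * T) ^ (1 / (R₀ * lam)) := by
  have hqT1 : (1:ℝ) < q * T := by nlinarith
  have hLpos : 0 < Real.log (q * T) := Real.log_pos hqT1
  have hqγ1 : (1:ℝ) < q * |ρ.im| := by nlinarith
  have hlogγ : 0 < Real.log (q * |ρ.im|) := Real.log_pos hqγ1
  have key : Real.log (q * T) / (R₀ * lam) < Real.log (q * |ρ.im|) := by
    rw [hβ] at hβzf
    have h1 : 1 / (R₀ * Real.log (q * |ρ.im|)) < lam / Real.log (q * T) := by
      linarith
    rw [div_lt_div_iff₀ (by positivity) hLpos] at h1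
    rw [div_lt_iff₀ (by positivity)]
    nlinarith
  have hpow : (q * T) ^ (1 / (R₀ * lam)) < q * |ρ.im| := by
    rw [Real.rpow_def_of_pos (by linarith)]
    calc Real.exp (Real.log (q * T) * (1 / (R₀ * lam)))
        < Real.exp (Real.log (q * |ρ.im|)) := by
          apply Real.exp_lt_exp.mpr; rw [mul_one_div]; exact key
      _ = q * |ρ.im| := Real.exp_log (by linarith)
  have hx0 : (0:ℝ) < x ^ (-(lam / Real.log (q * T))) :=
    Real.rpow_pos_of_pos (by linarith) _
  have hre : ρ.re - 1 = -(lam / Real.log (q * T)) := by rw [hβ]; ring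
  rw [hre, div_le_div_iff₀ (by linarith) (Real.rpow_pos_of_pos (by linarith) _)]
  nlinarith [mul_lt_mul_of_pos_left hpow hx0]
end

section
/- Let x ≥ 2, q ≥ 2, R₀ > 0, and let ρ = β + iγ be a complex number with |γ| ≥ 1 and β ≤ 1 - 1/(R₀ log(q|γ|)). Then x^{β-1}/|ρ| ≤ q·exp(-2√(log x / R₀)). -/
open Real

/-!
Write `t = q|γ|`. Then `x^(β-1) ≤ exp (-log x / (R₀ log t))`, and AM-GM on the two terms
`log x / (R₀ log t)` and `log t`, whose product is `log x / R₀`, bounds this by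
`t exp (-2 √(log x / R₀))`. Dividing by `|ρ| ≥ |γ|` removes the factor `|γ|` from `t`.
-/

theorem Real.two_mul_sqrt_le_div_add {a b : ℝ} (ha : 0 ≤ a) (hb : 0 < b) :
    2 * √a ≤ a / b + b := by
  rw [div_add' _ _ _ hb.ne', le_div_iff₀ hb]
  nlinarith [two_mul_le_add_sq √a b, sq_sqrt ha]

theorem Real.rpow_sub_one_le_mul_exp_neg_sqrt {x t R₀ β : ℝ} (hx : 1 ≤ x) (ht : 1 < t)
    (hR₀ : 0 ≤ R₀) (hβ : β ≤ 1 - 1 / (R₀ * log t)) :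
    x ^ (β - 1) ≤ t * exp (-2 * √(log x / R₀)) := by
  have hlogx : 0 ≤ log x := log_nonneg hx
  have hlogt : 0 < log t := log_pos ht
  have hexponent : log x * (β - 1) ≤ log t + -2 * √(log x / R₀) :=
    calc log x * (β - 1) ≤ log x * -(1 / (R₀ * log t)) :=
          mul_le_mul_of_nonneg_left (by linarith) hlogx
      _ = -(log x / R₀ / log t) := by rw [div_div]; ring
      _ ≤ log t + -2 * √(log x / R₀) := by
          linarith [two_mul_sqrt_le_div_add (div_nonneg hlogx hR₀) hlogt]
  calc x ^ (β - 1) = exp (log x * (β - 1)) := rpow_def_of_pos (by linarith) _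
    _ ≤ exp (log t + -2 * √(log x / R₀)) := exp_le_exp.mpr hexponent
    _ = t * exp (-2 * √(log x / R₀)) := by rw [exp_add, exp_log (by linarith)]

theorem rpow_div_abs_le_exp (x q R₀ : ℝ) (ρ : ℂ)
    (hx : 2 ≤ x) (hq : 2 ≤ q) (hR₀ : 0 < R₀)
    (hγ : 1 ≤ |ρ.im|)
    (hβ : ρ.re ≤ 1 - 1 / (R₀ * Real.log (q * |ρ.im|))) :
    x ^ (ρ.re - 1) / ‖ρ‖ ≤
      q * Real.exp (-2 * Real.sqrt (Real.log x / R₀)) := by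
  have hγ₀ : 0 < |ρ.im| := by linarith
  have hbound : x ^ (ρ.re - 1) ≤ q * |ρ.im| * exp (-2 * √(log x / R₀)) :=
    rpow_sub_one_le_mul_exp_neg_sqrt (by linarith) (by nlinarith) hR₀.le hβ
  calc x ^ (ρ.re - 1) / ‖ρ‖ ≤ x ^ (ρ.re - 1) / |ρ.im| :=
        div_le_div_of_nonneg_left (by positivity) hγ₀ (Complex.abs_im_le_norm ρ)
    _ ≤ q * |ρ.im| * exp (-2 * √(log x / R₀)) / |ρ.im| := by gcongr
    _ = q * exp (-2 * √(log x / R₀)) := by field_simp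
end
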